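/- Let Λ ⊆ ℂ be a lattice and let ω, ω' ∈ ℂ be nonzero with ω·Λ ⊆ Λ and ω'·Λ ⊆ Λ. Suppose k is a positive integer with ω^k = ω'^k. Then for every n ≥ 0, both ([ω] × [ω'])^{n+k}(Δ) = ([ω] × [ω'])^{n}(Δ) and (φ_ω × φ_{ω'})^{n+k}(Δ') = (φ_ω × φ_{ω'})^{n}(Δ'); that is, Δ and Δ' are pre-periodic with the same pair (n,k). -/

import Mathlib

/-!
Multiplication by `ω` on `ℂ` descends to `E` and, through `q`, to `E/±`, so the `m`-th iterates of
`[ω]` and `φ_ω` are induced by multiplication by `ω ^ m`. Hence `ω ^ k = ω' ^ k` makes the `k`-th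
iterates of the two coordinate maps coincide, and they are surjective since `ω ^ k ≠ 0`. A product
map `g × g` with `g` surjective maps the diagonal onto itself, so the `k`-th iterate of the product
fixes the diagonal, and applying `n` further iterates gives the pair `(n, k)`.
-/

open Complex

noncomputable section

/-- The analytic model `E = ℂ/Λ` of an elliptic curve with period lattice `Λ`. -/
abbrev EC (Λ : AddSubgroup ℂ) : Type := ℂ ⧸ Λ

/-- The endomorphism `[ω] : E → E` induced by multiplication by `ω` on `ℂ`,
for `ω` with `ω·Λ ⊆ Λ`. -/
def mulE (Λ : AddSubgroup ℂ) (ω : ℂ) (hω : ∀ x ∈ Λ, ω * x ∈ Λ) : EC Λ →+ EC Λ :=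
  QuotientAddGroup.map Λ Λ (AddMonoidHom.mulLeft ω) (fun x hx => hω x hx)

/-- The relation identifying a point of `E` with its negative. -/
def negRel (Λ : AddSubgroup ℂ) (x y : EC Λ) : Prop := x = y ∨ x = -y

/-- The quotient `E/±` of `E` by the involution `z ↦ -z`. -/
abbrev ECpm (Λ : AddSubgroup ℂ) : Type := Quot (negRel Λ)

/-- The quotient map `q : E → E/±`. -/
def qpm (Λ : AddSubgroup ℂ) : EC Λ → ECpm Λ := Quot.mk _

/-- The Lattès-type map `φ_ω : E/± → E/±` induced by `[ω]`. -/
def lattes (Λ : AddSubgroup ℂ) (ω : ℂ) (hω : ∀ x ∈ Λ, ω * x ∈ Λ) :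
    ECpm Λ → ECpm Λ :=
  Quot.map (mulE Λ ω hω) (by
    intro x y h
    rcases h with h | h
    · exact Or.inl (by rw [h])
    · exact Or.inr (by rw [h, map_neg]))

open Function Set

theorem Set.image_iterate_add_eq_of_image_iterate_eq {α : Type*} {f : α → α} {s : Set α}
    {k : ℕ} (h : f^[k] '' s = s) (n : ℕ) : f^[n + k] '' s = f^[n] '' s := by
  rw [iterate_add, image_comp, h]

theorem Set.image_prodMap_diagonal_of_surjective {α β : Type*} {g : α → β}
    (hg : Surjective g) : Prod.map g g '' diagonal α = diagonal β := by
  rw [← range_diag, ← range_comp, ← range_diag]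
  exact hg.range_comp Function.diag

theorem Set.image_iterate_add_prodMap_diagonal {α : Type*} {f g : α → α} {k : ℕ}
    (hfg : f^[k] = g^[k]) (hf : Surjective f^[k]) (n : ℕ) :
    (Prod.map f g)^[n + k] '' diagonal α = (Prod.map f g)^[n] '' diagonal α := by
  refine image_iterate_add_eq_of_image_iterate_eq ?_ n
  rw [Prod.map_iterate, ← hfg]
  exact image_prodMap_diagonal_of_surjective hf

section EllipticCurve

variable {Λ : AddSubgroup ℂ} {ω ω' : ℂ} {hω : ∀ x ∈ Λ, ω * x ∈ Λ} {hω' : ∀ x ∈ Λ, ω' * x ∈ Λ}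

theorem mulE_mk (w : ℂ) : mulE Λ ω hω (w : EC Λ) = ((ω * w : ℂ) : EC Λ) :=
  rfl

theorem mulE_iterate_mk (m : ℕ) (w : ℂ) :
    (mulE Λ ω hω)^[m] (w : EC Λ) = ((ω ^ m * w : ℂ) : EC Λ) := by
  induction m with
  | zero => simp
  | succ m ih => rw [iterate_succ_apply', ih, mulE_mk, pow_succ', mul_assoc]

theorem mulE_surjective (hω0 : ω ≠ 0) : Surjective (mulE Λ ω hω) := by
  rintro ⟨w⟩
  exact ⟨((w / ω : ℂ) : EC Λ), congrArg _ (mul_div_cancel₀ w hω0)⟩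

theorem mulE_iterate_eq_of_pow_eq {m : ℕ} (h : ω ^ m = ω' ^ m) :
    (mulE Λ ω hω)^[m] = (mulE Λ ω' hω')^[m] := by
  funext x
  induction x using QuotientAddGroup.induction_on
  rw [mulE_iterate_mk, mulE_iterate_mk, h]

theorem semiconj_qpm_mulE_lattes : Semiconj (qpm Λ) (mulE Λ ω hω) (lattes Λ ω hω) :=
  fun _ => rfl

theorem lattes_surjective (hω0 : ω ≠ 0) : Surjective (lattes Λ ω hω) := by
  refine Surjective.of_comp (g := qpm Λ) ?_
  rw [← semiconj_qpm_mulE_lattes.comp_eq]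
  exact Quot.mk_surjective.comp (mulE_surjective hω0)

theorem lattes_iterate_eq_of_pow_eq {m : ℕ} (h : ω ^ m = ω' ^ m) :
    (lattes Λ ω hω)^[m] = (lattes Λ ω' hω')^[m] := by
  funext x
  induction x using Quot.ind with
  | mk z =>
    rw [← qpm, ← (semiconj_qpm_mulE_lattes.iterate_right m).eq,
      ← (semiconj_qpm_mulE_lattes.iterate_right m).eq, mulE_iterate_eq_of_pow_eq h]

end EllipticCurve

theorem both_diagonals_preperiodic_of_pow_eq_pow_general
    (Λ : AddSubgroup ℂ)
    (ω ω' : ℂ) (hω0 : ω ≠ 0)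
    (hω : ∀ x ∈ Λ, ω * x ∈ Λ) (hω' : ∀ x ∈ Λ, ω' * x ∈ Λ)
    (k : ℕ) (hpow : ω ^ k = ω' ^ k) (n : ℕ) :
    (Prod.map ⇑(mulE Λ ω hω) ⇑(mulE Λ ω' hω'))^[n + k] '' Set.diagonal (EC Λ) =
      (Prod.map ⇑(mulE Λ ω hω) ⇑(mulE Λ ω' hω'))^[n] '' Set.diagonal (EC Λ) ∧
    (Prod.map (lattes Λ ω hω) (lattes Λ ω' hω'))^[n + k] '' Set.diagonal (ECpm Λ) =
      (Prod.map (lattes Λ ω hω) (lattes Λ ω' hω'))^[n] '' Set.diagonal (ECpm Λ) :=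
  ⟨image_iterate_add_prodMap_diagonal (mulE_iterate_eq_of_pow_eq hpow)
      ((mulE_surjective hω0).iterate k) n,
    image_iterate_add_prodMap_diagonal (lattes_iterate_eq_of_pow_eq hpow)
      ((lattes_surjective hω0).iterate k) n⟩

/-- If `ω^k = ω'^k` with `k > 0`, then for every `n` both the diagonal `Δ` is pre-periodic for
`[ω] × [ω']` with pair `(n, k)` and the diagonal `Δ'` is pre-periodic for `φ_ω × φ_ω'` with
the same pair `(n, k)`. -/
theorem both_diagonals_preperiodic_of_pow_eq_pow
    (ω₁ ω₂ : ℂ) (hind : LinearIndependent ℝ ![ω₁, ω₂])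
    (Λ : AddSubgroup ℂ) (hΛ : Λ = AddSubgroup.closure {ω₁, ω₂})
    (ω ω' : ℂ) (hω0 : ω ≠ 0) (hω'0 : ω' ≠ 0)
    (hω : ∀ x ∈ Λ, ω * x ∈ Λ) (hω' : ∀ x ∈ Λ, ω' * x ∈ Λ)
    (k : ℕ) (hk : 0 < k) (hpow : ω ^ k = ω' ^ k) (n : ℕ) :
    (Prod.map ⇑(mulE Λ ω hω) ⇑(mulE Λ ω' hω'))^[n + k] '' Set.diagonal (EC Λ) =
      (Prod.map ⇑(mulE Λ ω hω) ⇑(mulE Λ ω' hω'))^[n] '' Set.diagonal (EC Λ) ∧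
    (Prod.map (lattes Λ ω hω) (lattes Λ ω' hω'))^[n + k] '' Set.diagonal (ECpm Λ) =
      (Prod.map (lattes Λ ω hω) (lattes Λ ω' hω'))^[n] '' Set.diagonal (ECpm Λ) :=
  both_diagonals_preperiodic_of_pow_eq_pow_general Λ ω ω' hω0 hω hω' k hpow n
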